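/- For every λ ∈ K and every integer n ≥ 0: the kernel of the even part of D(n) is 3-dimensional, spanned by E3, E6 and −λE1 + (n+1−m)E4 + E5; and the kernel of the odd part of D(n) is spanned by O2, O5 and O1 + (n−m−λ)O6 when λ ≠ −(n+2) (so it is 3-dimensional), while for λ = −(n+2) it is 4-dimensional, spanned additionally by O3. -/

import Mathlib

/-!
Each kernel is cut out by a few linear equations read off from the matrix. Every proposed
spanning family has a pivot coordinate per vector, where that vector is `1` and the others
vanish; a kernel vector vanishing at all pivots is zero, so subtracting the pivot combination
shows the family spans, and evaluating at the pivots shows it is linearly independent.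
-/

namespace LinfCohomology

variable {K : Type*} [Field K] [CharZero K]

/- Cochain conventions: for `n ≥ 0`, the even part of `C(n)` has coordinates
`E1,…,E6` (for `φ^{1,0,n+1}_1, φ^{1,0,n+1}_2, φ^{0,1,n+1}_1, φ^{0,1,n+1}_2,
φ^{0,0,n+2}_3, φ^{1,1,n}_3`) and the odd part has coordinates `O1,…,O6` (for
`ψ^{1,0,n+1}_3, ψ^{0,1,n+1}_3, ψ^{0,0,n+2}_1, ψ^{0,0,n+2}_2, ψ^{1,1,n}_1,
ψ^{1,1,n}_2`); `C(-1)` has even coordinates `E1,…,E5` and odd `O1,…,O4`. -/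

/-- The even part of the coboundary operator `D(n)` of
`d_λ = ψ^{0,1,m+1}_3 + λψ^{1,1,m}_1`, for `n ≥ 0`:
`E1 ↦ -(n+1)O5`, `E2 ↦ -O1+(λ-n-1)O6`, `E3 ↦ 0`, `E4 ↦ -O2-λO5`,
`E5 ↦ (n+1-m)O2-λmO5`, `E6 ↦ 0`. -/
def De (m : ℕ) (lam : K) (n : ℕ) : (Fin 6 → K) →ₗ[K] (Fin 6 → K) :=
  Matrix.mulVecLin
    !![0, -1, 0, 0, 0, 0;
       0, 0, 0, -1, (n : K) + 1 - (m : K), 0;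
       0, 0, 0, 0, 0, 0;
       0, 0, 0, 0, 0, 0;
       -((n : K) + 1), 0, 0, -lam, -(lam * (m : K)), 0;
       0, lam - (n : K) - 1, 0, 0, 0, 0]

/-- The odd part of the coboundary operator `D(n)` of `d_λ`, for `n ≥ 0`:
`O1 ↦ (λ+m-n)E6`, `O2 ↦ 0`, `O3 ↦ (λ+n+2)E3`, `O4 ↦ -λE1+(n+2)E4+E5`,
`O5 ↦ 0`, `O6 ↦ E6`. -/
def Do (m : ℕ) (lam : K) (n : ℕ) : (Fin 6 → K) →ₗ[K] (Fin 6 → K) :=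
  Matrix.mulVecLin
    !![0, 0, 0, -lam, 0, 0;
       0, 0, 0, 0, 0, 0;
       0, 0, lam + (n : K) + 2, 0, 0, 0;
       0, 0, 0, (n : K) + 2, 0, 0;
       0, 0, 0, 1, 0, 0;
       lam + (m : K) - (n : K), 0, 0, 0, 0, 1]

/-- The even part of `D(-1)` of `d_λ` (on degree-1 cochains):
`E1 ↦ 0`, `E2 ↦ -O1+λO6`, `E3 ↦ 0`, `E4 ↦ -O2-λO5`, `E5 ↦ -mO2-λmO5`. -/
def DeNeg1 (m : ℕ) (lam : K) : (Fin 5 → K) →ₗ[K] (Fin 6 → K) :=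
  Matrix.mulVecLin
    !![0, -1, 0, 0, 0;
       0, 0, 0, -1, -(m : K);
       0, 0, 0, 0, 0;
       0, 0, 0, 0, 0;
       0, 0, 0, -lam, -(lam * (m : K));
       0, lam, 0, 0, 0]

/-- The odd part of `D(-1)` of `d_λ` (on degree-1 cochains):
`O1 ↦ (λ+m+1)E6`, `O2 ↦ 0`, `O3 ↦ (λ+1)E3`, `O4 ↦ -λE1+E4+E5`. -/
def DoNeg1 (m : ℕ) (lam : K) : (Fin 4 → K) →ₗ[K] (Fin 6 → K) :=
  Matrix.mulVecLin
    !![0, 0, 0, -lam;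
       0, 0, 0, 0;
       0, 0, lam + 1, 0;
       0, 0, 0, 1;
       0, 0, 0, 1;
       lam + (m : K) + 1, 0, 0, 0]

section Pivots

variable {R ι κ : Type*} [Ring R] [Fintype ι] [DecidableEq ι]

theorem linearIndependent_of_pivots {v : ι → κ → R} {p : ι → κ}
    (hp : ∀ i j, v i (p j) = (Pi.single i 1 : ι → R) j) : LinearIndependent R v := by
  refine LinearIndependent.of_comp (LinearMap.funLeft R R p) ?_
  convert (Pi.basisFun R ι).linearIndependent
  ext i j
  simpa using hp i j

theorem eq_span_of_pivots {S : Submodule R (κ → R)} {v : ι → κ → R} {p : ι → κ}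
    (hp : ∀ i j, v i (p j) = (Pi.single i 1 : ι → R) j) (hvS : ∀ i, v i ∈ S)
    (hS : ∀ x ∈ S, (∀ i, x (p i) = 0) → x = 0) :
    S = Submodule.span R (Set.range v) := by
  refine le_antisymm (fun x hx => ?_) (Submodule.span_le.mpr (Set.range_subset_iff.mpr hvS))
  set y := ∑ i, x (p i) • v i
  have hy : y ∈ Submodule.span R (Set.range v) :=
    Submodule.sum_mem _ fun i _ => Submodule.smul_mem _ _ (Submodule.subset_span ⟨i, rfl⟩)
  have hyS : y ∈ S := Submodule.sum_mem _ fun i _ => S.smul_mem _ (hvS i)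
  have hxy : x - y = 0 := by
    refine hS _ (S.sub_mem hx hyS) fun j => ?_
    simp [y, Finset.sum_apply, hp, Pi.single_apply]
  rwa [sub_eq_zero.mp hxy]

theorem eq_span_and_finrank_of_pivots [Nontrivial R] [StrongRankCondition R]
    {S : Submodule R (κ → R)} {v : ι → κ → R} {p : ι → κ}
    (hp : ∀ i j, v i (p j) = (Pi.single i 1 : ι → R) j) (hvS : ∀ i, v i ∈ S)
    (hS : ∀ x ∈ S, (∀ i, x (p i) = 0) → x = 0) :
    S = Submodule.span R (Set.range v) ∧ Module.finrank R S = Fintype.card ι := by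
  have hspan := eq_span_of_pivots hp hvS hS
  refine ⟨hspan, ?_⟩
  rw [hspan, finrank_span_eq_card (linearIndependent_of_pivots hp)]

end Pivots

omit [CharZero K] in
theorem De_apply (m : ℕ) (lam : K) (n : ℕ) (x : Fin 6 → K) :
    De m lam n x = ![-x 1, -x 3 + ((n : K) + 1 - m) * x 4, 0, 0,
      -((n : K) + 1) * x 0 - lam * x 3 - lam * m * x 4, (lam - n - 1) * x 1] := by
  ext i
  fin_cases i <;> simp [De, dotProduct, Fin.sum_univ_succ, sub_eq_add_neg, add_assoc]

omit [CharZero K] in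
theorem Do_apply (m : ℕ) (lam : K) (n : ℕ) (x : Fin 6 → K) :
    Do m lam n x = ![-lam * x 3, 0, (lam + n + 2) * x 2, ((n : K) + 2) * x 3, x 3,
      (lam + m - n) * x 0 + x 5] := by
  ext i
  fin_cases i <;> simp [Do, dotProduct, Fin.sum_univ_succ]

theorem mem_ker_De_iff (m : ℕ) (lam : K) (n : ℕ) (x : Fin 6 → K) :
    x ∈ LinearMap.ker (De m lam n) ↔
      x 1 = 0 ∧ x 3 = ((n : K) + 1 - m) * x 4 ∧ x 0 = -lam * x 4 := by
  have hn : (n : K) + 1 ≠ 0 := by exact_mod_cast n.succ_ne_zero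
  simp only [LinearMap.mem_ker, De_apply, Matrix.cons_eq_zero_iff, Matrix.zero_empty, neg_eq_zero,
    and_true, true_and]
  constructor
  · rintro ⟨h1, h3, h0, -⟩
    refine ⟨h1, by linear_combination -h3, mul_left_cancel₀ hn ?_⟩
    linear_combination -h0 + lam * h3
  · rintro ⟨h1, h3, h0⟩
    refine ⟨h1, by linear_combination -h3, ?_, by rw [h1, mul_zero]⟩
    linear_combination -((n : K) + 1) * h0 - lam * h3

omit [CharZero K] in
theorem mem_ker_Do_iff (m : ℕ) (lam : K) (n : ℕ) (x : Fin 6 → K) :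
    x ∈ LinearMap.ker (Do m lam n) ↔
      x 3 = 0 ∧ (lam + n + 2) * x 2 = 0 ∧ x 5 = ((n : K) - m - lam) * x 0 := by
  simp only [LinearMap.mem_ker, Do_apply, Matrix.cons_eq_zero_iff, Matrix.zero_empty,
    and_true, true_and]
  constructor
  · rintro ⟨-, h2, -, h3, h5⟩
    exact ⟨h3, h2, by linear_combination h5⟩
  · rintro ⟨h3, h2, h5⟩
    refine ⟨by rw [h3, mul_zero], h2, by rw [h3, mul_zero], h3, by linear_combination h5⟩

theorem ker_De_eq_span_and_finrank (m : ℕ) (lam : K) (n : ℕ) :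
    LinearMap.ker (De m lam n) =
        Submodule.span K {(![0, 0, 1, 0, 0, 0] : Fin 6 → K),
          ![0, 0, 0, 0, 0, 1], ![-lam, 0, 0, (n : K) + 1 - (m : K), 1, 0]} ∧
      Module.finrank K (LinearMap.ker (De m lam n)) = 3 := by
  obtain ⟨hspan, hrank⟩ := eq_span_and_finrank_of_pivots (S := LinearMap.ker (De m lam n))
    (v := ![![0, 0, 1, 0, 0, 0], ![0, 0, 0, 0, 0, 1], ![-lam, 0, 0, (n : K) + 1 - (m : K), 1, 0]])
    (p := ![2, 5, 4])
    (by intro i j; fin_cases i <;> fin_cases j <;> simp)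
    (by intro i; rw [mem_ker_De_iff]; fin_cases i <;> simp)
    (by
      intro x hx hpiv
      obtain ⟨h1, h3, h0⟩ := (mem_ker_De_iff m lam n x).mp hx
      simp only [Fin.forall_fin_succ] at hpiv
      funext i; fin_cases i <;> simp_all)
  simp only [Matrix.range_cons, Matrix.range_empty, Set.union_empty, Set.singleton_union] at hspan
  exact ⟨hspan, hrank⟩

omit [CharZero K] in
theorem ker_Do_eq_span_and_finrank_of_ne (m : ℕ) (lam : K) (n : ℕ)
    (hlam : lam ≠ -((n : K) + 2)) :
    LinearMap.ker (Do m lam n) =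
        Submodule.span K {(![0, 1, 0, 0, 0, 0] : Fin 6 → K),
          ![0, 0, 0, 0, 1, 0], ![1, 0, 0, 0, 0, (n : K) - (m : K) - lam]} ∧
      Module.finrank K (LinearMap.ker (Do m lam n)) = 3 := by
  have hlam' : lam + n + 2 ≠ 0 := fun h => hlam (by linear_combination h)
  obtain ⟨hspan, hrank⟩ := eq_span_and_finrank_of_pivots (S := LinearMap.ker (Do m lam n))
    (v := ![![0, 1, 0, 0, 0, 0], ![0, 0, 0, 0, 1, 0], ![1, 0, 0, 0, 0, (n : K) - (m : K) - lam]])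
    (p := ![1, 4, 0])
    (by intro i j; fin_cases i <;> fin_cases j <;> simp)
    (by intro i; rw [mem_ker_Do_iff]; fin_cases i <;> simp)
    (by
      intro x hx hpiv
      obtain ⟨h3, h2, h5⟩ := (mem_ker_Do_iff m lam n x).mp hx
      simp only [Fin.forall_fin_succ] at hpiv
      funext i; fin_cases i <;> simp_all)
  simp only [Matrix.range_cons, Matrix.range_empty, Set.union_empty, Set.singleton_union] at hspan
  exact ⟨hspan, hrank⟩

omit [CharZero K] in
theorem ker_Do_eq_span_and_finrank_of_eq (m : ℕ) (lam : K) (n : ℕ)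
    (hlam : lam = -((n : K) + 2)) :
    LinearMap.ker (Do m lam n) =
        Submodule.span K {(![0, 1, 0, 0, 0, 0] : Fin 6 → K),
          ![0, 0, 0, 0, 1, 0], ![1, 0, 0, 0, 0, (n : K) - (m : K) - lam],
          ![0, 0, 1, 0, 0, 0]} ∧
      Module.finrank K (LinearMap.ker (Do m lam n)) = 4 := by
  have hlam' : lam + n + 2 = 0 := by rw [hlam]; ring
  obtain ⟨hspan, hrank⟩ := eq_span_and_finrank_of_pivots (S := LinearMap.ker (Do m lam n))
    (v := ![![0, 1, 0, 0, 0, 0], ![0, 0, 0, 0, 1, 0], ![1, 0, 0, 0, 0, (n : K) - (m : K) - lam],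
      ![0, 0, 1, 0, 0, 0]])
    (p := ![1, 4, 0, 2])
    (by intro i j; fin_cases i <;> fin_cases j <;> simp)
    (by intro i; rw [mem_ker_Do_iff]; fin_cases i <;> simp [hlam'])
    (by
      intro x hx hpiv
      obtain ⟨h3, -, h5⟩ := (mem_ker_Do_iff m lam n x).mp hx
      simp only [Fin.forall_fin_succ] at hpiv
      funext i; fin_cases i <;> simp_all)
  simp only [Matrix.range_cons, Matrix.range_empty, Set.union_empty, Set.singleton_union] at hspan
  exact ⟨hspan, hrank⟩

/-- For every `λ ∈ K` and `n ≥ 0`: the kernel of the even part of `D(n)` is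
3-dimensional, spanned by `E3`, `E6` and `-λE1+(n+1-m)E4+E5`; the kernel of the
odd part is spanned by `O2`, `O5` and `O1+(n-m-λ)O6` when `λ ≠ -(n+2)`
(3-dimensional), and for `λ = -(n+2)` it is 4-dimensional, spanned additionally
by `O3`. -/
theorem dLam_kernels (m : ℕ) (lam : K) (n : ℕ) :
    (LinearMap.ker (De m lam n) =
        Submodule.span K {(![0, 0, 1, 0, 0, 0] : Fin 6 → K),
          ![0, 0, 0, 0, 0, 1], ![-lam, 0, 0, (n : K) + 1 - (m : K), 1, 0]} ∧
      Module.finrank K (LinearMap.ker (De m lam n)) = 3) ∧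
    (lam ≠ -((n : K) + 2) →
      LinearMap.ker (Do m lam n) =
          Submodule.span K {(![0, 1, 0, 0, 0, 0] : Fin 6 → K),
            ![0, 0, 0, 0, 1, 0], ![1, 0, 0, 0, 0, (n : K) - (m : K) - lam]} ∧
        Module.finrank K (LinearMap.ker (Do m lam n)) = 3) ∧
    (lam = -((n : K) + 2) →
      LinearMap.ker (Do m lam n) =
          Submodule.span K {(![0, 1, 0, 0, 0, 0] : Fin 6 → K),
            ![0, 0, 0, 0, 1, 0], ![1, 0, 0, 0, 0, (n : K) - (m : K) - lam],
            ![0, 0, 1, 0, 0, 0]} ∧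
        Module.finrank K (LinearMap.ker (Do m lam n)) = 4) :=
  ⟨ker_De_eq_span_and_finrank m lam n, ker_Do_eq_span_and_finrank_of_ne m lam n,
    ker_Do_eq_span_and_finrank_of_eq m lam n⟩

end LinfCohomology
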